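/- Let X be a Cantor space and Φ : Γ × X → X a minimal action of a countable group Γ by homeomorphisms. Then Φ is equicontinuous if and only if for every clopen subset U ⊂ X, the orbit { Φ(g)(U) : g ∈ Γ } of U under the induced action of Γ on the collection of clopen subsets of X is a finite set. -/

import Mathlib

noncomputable section

open Set Topology

/-! ### The group of homeomorphisms -/

namespace Homeomorph

variable {X : Type*} [TopologicalSpace X]

instance instGroupHomeo : Group (X ≃ₜ X) where
  mul f g := g.trans f
  one := Homeomorph.refl X
  inv := Homeomorph.symm
  mul_assoc f g h := rfl
  one_mul f := rfl
  mul_one f := rfl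
  inv_mul_cancel f := Homeomorph.ext fun x => f.symm_apply_apply x

@[simp] theorem mul_apply' (f g : X ≃ₜ X) (x : X) : (f * g) x = f (g x) := rfl
@[simp] theorem one_apply' (x : X) : (1 : X ≃ₜ X) x = x := rfl
@[simp] theorem inv_eq_symm (f : X ≃ₜ X) : f⁻¹ = f.symm := rfl

/-- The uniform topology (topology of uniform convergence, equivalently for a compact
metric space the compact-open topology) on the group of homeomorphisms of a compact
metric space, as the metric topology of the sup-metric. -/
instance instMetricSpaceHomeomorph {Y : Type*} [MetricSpace Y] [CompactSpace Y] :
    MetricSpace (Y ≃ₜ Y) :=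
  MetricSpace.induced (fun h => (⟨h, h.continuous⟩ : C(Y, Y)))
    (fun f g hfg => Homeomorph.ext fun x => congrFun (congrArg ContinuousMap.toFun hfg) x)
    inferInstance

end Homeomorph

namespace Homeomorph

variable {Y : Type*} [MetricSpace Y] [CompactSpace Y]

theorem dist_eq_contMap (f g : Y ≃ₜ Y) :
    dist f g = dist (⟨f, f.continuous⟩ : C(Y, Y)) (⟨g, g.continuous⟩ : C(Y, Y)) := rfl

theorem dist_apply_le (f g : Y ≃ₜ Y) (x : Y) : dist (f x) (g x) ≤ dist f g :=
  ContinuousMap.dist_apply_le_dist (f := (⟨f, f.continuous⟩ : C(Y, Y)))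
    (g := (⟨g, g.continuous⟩ : C(Y, Y))) x

theorem dist_lt_iff' (f g : Y ≃ₜ Y) {C : ℝ} (hC : 0 < C) :
    dist f g < C ↔ ∀ x : Y, dist (f x) (g x) < C := by
  rw [dist_eq_contMap, ContinuousMap.dist_lt_iff hC]
  rfl

instance : IsTopologicalGroup (Y ≃ₜ Y) where
  continuous_mul := by
    rw [Metric.continuous_iff]
    rintro ⟨f₀, g₀⟩ ε hε
    obtain ⟨δ₁, hδ₁, H₁⟩ := Metric.uniformContinuous_iff.mp
      (CompactSpace.uniformContinuous_of_continuous f₀.continuous) (ε / 2) (by positivity)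
    refine ⟨min δ₁ (ε / 2), by positivity, ?_⟩
    rintro ⟨f, g⟩ hd
    have hdf : dist f f₀ < ε / 2 := by
      have h' : dist f f₀ ≤ dist ((f, g)) ((f₀, g₀)) := by
        rw [Prod.dist_eq]; exact le_max_left _ _
      exact (h'.trans_lt hd).trans_le (min_le_right _ _)
    have hdg : dist g g₀ < δ₁ := by
      have h' : dist g g₀ ≤ dist ((f, g)) ((f₀, g₀)) := by
        rw [Prod.dist_eq]; exact le_max_right _ _
      exact (h'.trans_lt hd).trans_le (min_le_left _ _)
    rw [dist_lt_iff' _ _ hε]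
    intro x
    have h1 : dist (f (g x)) (f₀ (g x)) < ε / 2 :=
      lt_of_le_of_lt (dist_apply_le f f₀ (g x)) hdf
    have h2 : dist (f₀ (g x)) (f₀ (g₀ x)) < ε / 2 :=
      H₁ (lt_of_le_of_lt (dist_apply_le g g₀ x) hdg)
    calc dist ((f * g) x) ((f₀ * g₀) x) ≤ dist (f (g x)) (f₀ (g x)) + dist (f₀ (g x)) (f₀ (g₀ x)) :=
          dist_triangle _ _ _
      _ < ε / 2 + ε / 2 := by exact add_lt_add h1 h2
      _ = ε := by ring
  continuous_inv := by
    rw [Metric.continuous_iff]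
    intro f₀ ε hε
    obtain ⟨δ, hδ, H⟩ := Metric.uniformContinuous_iff.mp
      (CompactSpace.uniformContinuous_of_continuous f₀.symm.continuous) ε hε
    refine ⟨δ, hδ, ?_⟩
    intro g hdg
    rw [dist_lt_iff' _ _ hε]
    intro y
    have key : dist (g (g.symm y)) (f₀ (g.symm y)) < δ :=
      lt_of_le_of_lt (dist_apply_le g f₀ (g.symm y)) hdg
    have h2 := H key
    have h3 : dist (f₀.symm (g (g.symm y))) (f₀.symm (f₀ (g.symm y))) < ε := h2
    rw [Homeomorph.apply_symm_apply, Homeomorph.symm_apply_apply] at h3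
    rw [dist_comm] at h3
    simpa using h3
end Homeomorph

/-! ### Steinitz (supernatural) numbers -/

/-- A Steinitz number: a formal product of primes with exponents in `ℕ∞`. -/
def SteinitzNum : Type := Nat.Primes → ℕ∞

namespace SteinitzNum

/-- The Steinitz number associated to a natural number. -/
def ofNat (n : ℕ) : SteinitzNum := fun p => (n.factorization (p : ℕ) : ℕ∞)

/-- Multiplication of Steinitz numbers adds the exponents at each prime. -/
instance : Mul SteinitzNum := ⟨fun a b p => a p + b p⟩

/-- The least common multiple of a collection of positive integers, as a Steinitz number:
its exponent at `p` is the supremum of the `p`-adic valuations of the elements. -/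
def lcmSet (S : Set ℕ) : SteinitzNum := fun p => ⨆ n ∈ S, (n.factorization (p : ℕ) : ℕ∞)

/-- Two Steinitz numbers are asymptotically equivalent if they agree after multiplication
by positive integers. -/
def AsympEquiv (a b : SteinitzNum) : Prop :=
  ∃ n₀ m₀ : ℕ, 0 < n₀ ∧ 0 < m₀ ∧ ofNat n₀ * a = ofNat m₀ * b

/-- The prime spectrum of a Steinitz number: primes with nonzero exponent. -/
def primeSpectrum (a : SteinitzNum) : Set Nat.Primes := { p | a p ≠ 0 }

/-- The finite prime spectrum: primes with finite nonzero exponent. -/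
def finitePrimeSpectrum (a : SteinitzNum) : Set Nat.Primes := { p | a p ≠ 0 ∧ a p ≠ ⊤ }

/-- The infinite prime spectrum: primes with infinite exponent. -/
def infinitePrimeSpectrum (a : SteinitzNum) : Set Nat.Primes := { p | a p = ⊤ }

end SteinitzNum

/-! ### Steinitz orders for topological groups -/

/-- The Steinitz order of a topological group: the LCM of the orders of the finite
quotients `G/N` over open normal subgroups `N ⊆ G`. -/
def steinitzOrder (G : Type*) [Group G] [TopologicalSpace G] : SteinitzNum :=
  SteinitzNum.lcmSet
    { n | ∃ N : Subgroup G, N.Normal ∧ IsOpen (N : Set G) ∧ n = Nat.card (G ⧸ N) }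

/-- The Steinitz order of a subgroup `D` of a topological group `G`: the LCM of the
cardinalities `|D/(N ∩ D)|` over open normal subgroups `N ⊆ G`. -/
def steinitzOrderOfSubgroup {G : Type*} [Group G] [TopologicalSpace G] (D : Subgroup G) :
    SteinitzNum :=
  SteinitzNum.lcmSet
    { n | ∃ N : Subgroup G, N.Normal ∧ IsOpen (N : Set G) ∧
        n = Nat.card (↥D ⧸ (N.subgroupOf D)) }

/-- The relative Steinitz order of a subgroup `D` of a topological group `G`: the LCM of the
cardinalities `|G/(N · D)|` over open normal subgroups `N ⊆ G`. -/
def steinitzRelativeOrder {G : Type*} [Group G] [TopologicalSpace G] (D : Subgroup G) :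
    SteinitzNum :=
  SteinitzNum.lcmSet
    { n | ∃ N : Subgroup G, N.Normal ∧ IsOpen (N : Set G) ∧ n = Nat.card (G ⧸ (N ⊔ D)) }

/-- A profinite (compact Hausdorff totally disconnected) topological group is topologically
Noetherian if every increasing chain of closed subgroups has a maximal element. -/
def TopologicallyNoetherian (G : Type*) [Group G] [TopologicalSpace G] : Prop :=
  ∀ c : ℕ → Subgroup G, (∀ i, IsClosed (c i : Set G)) → Monotone c → ∃ i₀, ∀ i, c i ≤ c i₀

/-! ### Cantor actions -/

section CantorActions

variable {X : Type*} [MetricSpace X] {Γ : Type*} [Group Γ]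

/-- An action is minimal if every orbit is dense. -/
def IsMinimalAction (Φ : Γ →* (X ≃ₜ X)) : Prop :=
  ∀ x : X, Dense (Set.range fun g : Γ => Φ g x)

/-- An action is equicontinuous if it satisfies the uniform `ε`-`δ` condition with respect
to the metric. -/
def IsEquicontinuousAction (Φ : Γ →* (X ≃ₜ X)) : Prop :=
  ∀ ε : ℝ, 0 < ε → ∃ δ : ℝ, 0 < δ ∧
    ∀ x y : X, dist x y < δ → ∀ g : Γ, dist (Φ g x) (Φ g y) < ε

variable [CompactSpace X]

/-- `G(Φ)`: the closure of the image of `Γ` in `Homeo(X)`, in the uniform topology. -/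
def profiniteClosure (Φ : Γ →* (X ≃ₜ X)) : Subgroup (X ≃ₜ X) :=
  Φ.range.topologicalClosure

/-- The discriminant group: the isotropy subgroup of `G(Φ)` at `x`. -/
def discriminant (Φ : Γ →* (X ≃ₜ X)) (x : X) : Subgroup (profiniteClosure Φ) where
  carrier := { h | (h : X ≃ₜ X) x = x }
  one_mem' := rfl
  mul_mem' := by
    intro a b ha hb
    simp only [Set.mem_setOf_eq] at *
    show ((a : X ≃ₜ X) * (b : X ≃ₜ X)) x = x
    rw [Homeomorph.mul_apply', hb, ha]
  inv_mem' := by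
    intro a ha
    simp only [Set.mem_setOf_eq] at *
    show ((a : X ≃ₜ X)⁻¹) x = x
    rw [Homeomorph.inv_eq_symm]
    conv_lhs => rw [← ha]
    exact Homeomorph.symm_apply_apply _ _

/-- The Steinitz order `Π[G(Φ)]` of a Cantor action. -/
def steinitzOrderAction (Φ : Γ →* (X ≃ₜ X)) : SteinitzNum :=
  steinitzOrder ↥(profiniteClosure Φ)

/-- The Steinitz order `Π[D(Φ,x)]` of the discriminant of a Cantor action. -/
def steinitzOrderDisc (Φ : Γ →* (X ≃ₜ X)) (x : X) : SteinitzNum :=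
  steinitzOrderOfSubgroup (discriminant Φ x)

/-- The relative Steinitz order `Π[G(Φ) : D(Φ,x)]` of a Cantor action. -/
def steinitzOrderRel (Φ : Γ →* (X ≃ₜ X)) (x : X) : SteinitzNum :=
  steinitzRelativeOrder (discriminant Φ x)

end CantorActions

/-! ### Adapted sets, holonomy and return equivalence -/

section Adapted

variable {X : Type*} [MetricSpace X] {Γ : Type*} [Group Γ]

/-- A nonempty clopen subset `U ⊆ X` is adapted to the action `Φ` if every group element
either fixes `U` or moves it entirely off of itself. -/
def IsAdaptedSet (Φ : Γ →* (X ≃ₜ X)) (U : Set X) : Prop :=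
  U.Nonempty ∧ IsClopen U ∧ ∀ g : Γ, ((Φ g) '' U ∩ U).Nonempty → (Φ g) '' U = U

/-- The stabilizer subgroup `Γ_U` of an adapted set. -/
def adaptedStabilizer (Φ : Γ →* (X ≃ₜ X)) (U : Set X) : Subgroup Γ where
  carrier := { g | (Φ g) '' U = U }
  one_mem' := by simp <;> exact Set.image_id U
  mul_mem' := by
    intro a b ha hb
    simp only [Set.mem_setOf_eq] at *
    rw [map_mul]
    show ((Φ a) * (Φ b)) '' U = U
    have : (((Φ a) * (Φ b) : X ≃ₜ X) : X → X) = (Φ a) ∘ (Φ b) := rfl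
    rw [this, Set.image_comp, hb, ha]
  inv_mem' := by
    intro a ha
    simp only [Set.mem_setOf_eq] at *
    rw [map_inv, Homeomorph.inv_eq_symm]
    conv_lhs => rw [← ha]
    rw [← Set.image_comp]
    simp

/-- The homeomorphism of an invariant set induced by a homeomorphism of `X`. -/
def restrictHomeo (h : X ≃ₜ X) {U : Set X} (hU : h '' U = U) : U ≃ₜ U :=
  (h.image U).trans (Homeomorph.setCongr hU)

@[simp] theorem restrictHomeo_coe (h : X ≃ₜ X) {U : Set X} (hU : h '' U = U) (x : U) :
    (restrictHomeo h hU x : X) = h x := rfl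

/-- The holonomy homomorphism of an adapted set: restriction of the stabilizer to `U`. -/
def holonomyHom (Φ : Γ →* (X ≃ₜ X)) (U : Set X) :
    adaptedStabilizer Φ U →* (↥U ≃ₜ ↥U) where
  toFun g := restrictHomeo (Φ (g : Γ)) g.2
  map_one' := by
    ext x
    show ((restrictHomeo (Φ ((1 : adaptedStabilizer Φ U) : Γ)) _ x : X) = _)
    simp
  map_mul' := by
    intro a b
    ext x
    show ((restrictHomeo (Φ ((a * b : adaptedStabilizer Φ U) : Γ)) _ x : X) = _)
    simp only [restrictHomeo_coe, Subgroup.coe_mul, map_mul]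
    rfl

/-- The holonomy group `H_U` of an adapted set: the image of the stabilizer in `Homeo(U)`. -/
def holonomyGroup (Φ : Γ →* (X ≃ₜ X)) (U : Set X) : Subgroup (↥U ≃ₜ ↥U) :=
  (holonomyHom Φ U).range

end Adapted

/-- Two Cantor actions are return equivalent if they admit adapted sets whose holonomy
actions are isomorphic, via a homeomorphism between the adapted sets together with a
compatible isomorphism of the holonomy groups. -/
def ReturnEquivalent
    {X₁ : Type*} [MetricSpace X₁] {Γ₁ : Type*} [Group Γ₁]
    {X₂ : Type*} [MetricSpace X₂] {Γ₂ : Type*} [Group Γ₂]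
    (Φ₁ : Γ₁ →* (X₁ ≃ₜ X₁)) (Φ₂ : Γ₂ →* (X₂ ≃ₜ X₂)) : Prop :=
  ∃ (U₁ : Set X₁) (U₂ : Set X₂), IsAdaptedSet Φ₁ U₁ ∧ IsAdaptedSet Φ₂ U₂ ∧
    ∃ (h : ↥U₁ ≃ₜ ↥U₂) (θ : holonomyGroup Φ₁ U₁ ≃* holonomyGroup Φ₂ U₂),
      ∀ k : holonomyGroup Φ₁ U₁,
        ((θ k : ↥U₂ ≃ₜ ↥U₂)) = h.symm.trans (((k : ↥U₁ ≃ₜ ↥U₁)).trans h)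

section Regularity

variable {X : Type*} [MetricSpace X]

/-- An action of a group `H` on `X` through a homomorphism `ρ : H →* Homeo(X)` is locally
quasi-analytic if there is `ε > 0` so that for every nonempty open `U` of diameter less
than `ε`, any element acting as the identity on a nonempty open subset `V ⊆ U` with
`ρ g (V) = V` acts as the identity on all of `U`. -/
def IsLocallyQuasiAnalytic {H : Type*} [Group H] (ρ : H →* (X ≃ₜ X)) : Prop :=
  ∃ ε : ℝ, 0 < ε ∧ ∀ U : Set X, IsOpen U → U.Nonempty → Metric.diam U < ε →
    ∀ V : Set X, V ⊆ U → IsOpen V → V.Nonempty →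
      ∀ g : H, (ρ g) '' V = V → (∀ x ∈ V, ρ g x = x) → ∀ x ∈ U, ρ g x = x

variable [CompactSpace X] {Γ : Type*} [Group Γ]

/-- A Cantor action is stable if the induced action of `G(Φ)` on `X` is locally
quasi-analytic; otherwise it is wild. -/
def IsStableAction (Φ : Γ →* (X ≃ₜ X)) : Prop :=
  IsLocallyQuasiAnalytic (profiniteClosure Φ).subtype

/-- An action is topologically free if the set of points fixed by some nontrivial group
element is meagre. -/
def IsTopologicallyFree (Φ : Γ →* (X ≃ₜ X)) : Prop :=
  IsMeagre { x : X | ∃ g : Γ, g ≠ 1 ∧ Φ g x = x }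

end Regularity

/-! A clopen set `W` of a compact metric space satisfies `thickening δ W ⊆ W` for all small
`δ > 0`, and for a fixed `δ` only finitely many sets do, each being determined by the points of
a finite `δ`-net that it contains. Equicontinuity provides one `δ` that works for all translates
of a clopen set, so its orbit is finite. Conversely, cover `X` by finitely many clopen sets of
diameter `< ε`; finiteness of their orbits gives one `δ` working for all their translates, and
then `g` maps two points at distance `< δ` into a common member of the cover. -/

open Metric

section Thickening

variable {X : Type*} [PseudoMetricSpace X]

theorem IsCompact.eventually_thickening_subset {K U : Set X} (hK : IsCompact K) (hU : IsOpen U)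
    (hKU : K ⊆ U) : ∀ᶠ δ in 𝓝[>] (0 : ℝ), thickening δ K ⊆ U := by
  obtain ⟨δ₀, hδ₀, hsub⟩ := hK.exists_thickening_subset_open hU hKU
  filter_upwards [nhdsWithin_le_nhds (eventually_lt_nhds hδ₀)] with δ hδ
  exact (thickening_mono hδ.le K).trans hsub

theorem finite_setOf_thickening_subset [CompactSpace X] {δ : ℝ} (hδ : 0 < δ) :
    {W : Set X | thickening δ W ⊆ W}.Finite := by
  obtain ⟨t, -, ht, hcover⟩ := finite_cover_balls_of_compact (isCompact_univ (X := X)) hδ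
  have trace_subset : ∀ W W' : Set X, thickening δ W ⊆ W → thickening δ W' ⊆ W' →
      t ∩ W ⊆ t ∩ W' → W ⊆ W' := by
    intro W W' hW hW' htW x hx
    obtain ⟨c, hct, hxc⟩ := mem_iUnion₂.mp (hcover (mem_univ x))
    have hcW : c ∈ W := hW (mem_thickening_iff.mpr ⟨x, hx, mem_ball'.mp hxc⟩)
    exact hW' (mem_thickening_iff.mpr ⟨c, (htW ⟨hct, hcW⟩).2, mem_ball.mp hxc⟩)
  refine Finite.of_finite_image (f := (t ∩ ·)) ?_ fun W hW W' hW' h => ?_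
  · exact ht.finite_subsets.subset (image_subset_iff.mpr fun W _ => inter_subset_left)
  · exact (trace_subset W W' hW hW' h.le).antisymm (trace_subset W' W hW' hW h.ge)

end Thickening

theorem exists_finite_isClopen_cover_of_dist_lt {X : Type*} [MetricSpace X] [CompactSpace X]
    [TotallyDisconnectedSpace X] {ε : ℝ} (hε : 0 < ε) :
    ∃ s : Set (Set X), s.Finite ∧ (∀ V ∈ s, IsClopen V ∧ ∀ x ∈ V, ∀ y ∈ V, dist x y < ε) ∧
      ∀ x, ∃ V ∈ s, x ∈ V := by
  choose V hV using fun x : X =>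
    compact_exists_isClopen_in_isOpen (isOpen_ball (x := x)) (mem_ball_self (half_pos hε))
  obtain ⟨t, ht⟩ := isCompact_univ.elim_finite_subcover V (fun x => (hV x).1.isOpen)
    fun x _ => mem_iUnion.mpr ⟨x, (hV x).2.1⟩
  refine ⟨V '' t, t.finite_toSet.image V, ?_, fun x => ?_⟩
  · rintro _ ⟨c, -, rfl⟩
    refine ⟨(hV c).1, fun x hx y hy => ?_⟩
    calc dist x y ≤ dist x c + dist y c := dist_triangle_right x y c
      _ < ε / 2 + ε / 2 := add_lt_add ((hV c).2.2 hx) ((hV c).2.2 hy)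
      _ = ε := add_halves ε
  · obtain ⟨c, hc, hx⟩ := mem_iUnion₂.mp (ht (mem_univ x))
    exact ⟨V c, mem_image_of_mem V hc, hx⟩

section Action

variable {X : Type*} [MetricSpace X] {Γ : Type*} [Group Γ] (Φ : Γ →* (X ≃ₜ X))

theorem mem_image_map_iff {g : Γ} {U : Set X} {y : X} : y ∈ Φ g '' U ↔ Φ g⁻¹ y ∈ U := by
  rw [(Φ g).image_eq_preimage_symm, map_inv, Homeomorph.inv_eq_symm]
  rfl

theorem IsEquicontinuousAction.exists_thickening_image_subset (heq : IsEquicontinuousAction Φ)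
    {U : Set X} {ε : ℝ} (hε : 0 < ε) (hU : thickening ε U ⊆ U) :
    ∃ δ > 0, ∀ g, thickening δ (Φ g '' U) ⊆ Φ g '' U := by
  obtain ⟨δ, hδ, hd⟩ := heq ε hε
  refine ⟨δ, hδ, fun g y hy => ?_⟩
  obtain ⟨_, ⟨u, hu, rfl⟩, hyu⟩ := mem_thickening_iff.mp hy
  rw [mem_image_map_iff]
  exact hU (mem_thickening_iff.mpr ⟨u, hu, by simpa using hd _ _ hyu g⁻¹⟩)

variable [CompactSpace X]

theorem IsEquicontinuousAction.finite_range_image (heq : IsEquicontinuousAction Φ) {U : Set X}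
    (hU : IsClopen U) : (range fun g => Φ g '' U).Finite := by
  obtain ⟨ε, hε, hεU⟩ := hU.isClosed.isCompact.exists_thickening_subset_open hU.isOpen subset_rfl
  obtain ⟨δ, hδ, hδU⟩ := heq.exists_thickening_image_subset Φ hε hεU
  exact (finite_setOf_thickening_subset hδ).subset (range_subset_iff.mpr hδU)

theorem exists_thickening_image_subset_of_finite_range_image {s : Set (Set X)} (hs : s.Finite)
    (hclopen : ∀ V ∈ s, IsClopen V) (horbit : ∀ V ∈ s, (range fun g => Φ g '' V).Finite) :
    ∃ δ > 0, ∀ V ∈ s, ∀ g, thickening δ (Φ g '' V) ⊆ Φ g '' V := by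
  have htranslates : (⋃ V ∈ s, range fun g => Φ g '' V).Finite := hs.biUnion horbit
  have hev : ∀ᶠ δ in 𝓝[>] (0 : ℝ), ∀ W ∈ ⋃ V ∈ s, range fun g => Φ g '' V,
      thickening δ W ⊆ W := by
    refine (Filter.eventually_all_finite htranslates).mpr fun W hW => ?_
    obtain ⟨V, hV, g, rfl⟩ := mem_iUnion₂.mp hW
    exact ((hclopen V hV).isClosed.isCompact.image (Φ g).continuous).eventually_thickening_subset
      ((Φ g).isOpenMap V (hclopen V hV).isOpen) subset_rfl
  obtain ⟨δ, hδ, hδpos⟩ := (hev.and self_mem_nhdsWithin).exists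
  exact ⟨δ, hδpos, fun V hV g => hδ _ (mem_iUnion₂.mpr ⟨V, hV, g, rfl⟩)⟩

theorem isEquicontinuousAction_of_finite_range_image [TotallyDisconnectedSpace X]
    (hfin : ∀ U : Set X, IsClopen U → (range fun g => Φ g '' U).Finite) :
    IsEquicontinuousAction Φ := by
  intro ε hε
  obtain ⟨s, hs, hsmall, hcover⟩ := exists_finite_isClopen_cover_of_dist_lt (X := X) hε
  obtain ⟨δ, hδ, hsat⟩ := exists_thickening_image_subset_of_finite_range_image Φ hs
    (fun V hV => (hsmall V hV).1) fun V hV => hfin V (hsmall V hV).1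
  refine ⟨δ, hδ, fun x y hxy g => ?_⟩
  obtain ⟨V, hV, hgx⟩ := hcover (Φ g x)
  have hx : x ∈ Φ g⁻¹ '' V := by rwa [mem_image_map_iff, inv_inv]
  have hy : y ∈ Φ g⁻¹ '' V :=
    hsat V hV g⁻¹ (mem_thickening_iff.mpr ⟨x, hx, by rwa [dist_comm]⟩)
  rw [mem_image_map_iff, inv_inv] at hy
  exact (hsmall V hV).2 _ hgx _ hy

end Action

theorem equicontinuous_iff_finite_clopen_orbits_general
    {X : Type*} [MetricSpace X] [CompactSpace X] [TotallyDisconnectedSpace X]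
    {Γ : Type*} [Group Γ] (Φ : Γ →* (X ≃ₜ X)) :
    IsEquicontinuousAction Φ ↔
      ∀ U : Set X, IsClopen U → (Set.range fun g : Γ => (Φ g) '' U).Finite :=
  ⟨fun heq _ hU => heq.finite_range_image Φ hU, isEquicontinuousAction_of_finite_range_image Φ⟩

/-- A minimal action of a countable group on a Cantor space is
equicontinuous if and only if the orbit of every clopen set under the induced action
on clopen subsets is finite. -/
theorem equicontinuous_iff_finite_clopen_orbits
    {X : Type*} [MetricSpace X] [CompactSpace X] [Nonempty X] [TotallyDisconnectedSpace X]
    (hperf : Perfect (Set.univ : Set X))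
    {Γ : Type*} [Group Γ] [Countable Γ] (Φ : Γ →* (X ≃ₜ X))
    (hmin : IsMinimalAction Φ) :
    IsEquicontinuousAction Φ ↔
      ∀ U : Set X, IsClopen U → (Set.range fun g : Γ => (Φ g) '' U).Finite :=
  equicontinuous_iff_finite_clopen_orbits_general Φ
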